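/- arXiv:1606.04431 — 2 statements merged into one kernel-verified Lean document; each statement's English description precedes it below -/
import Mathlib

section
/- In the interventional DAG D_interv obtained from a time-invariant DAG D of a stationary Markov process of order p₀ (with possible instantaneous effects) by deleting all edges into node (c₂, t-s): if every path between X_{c₂,t-s} and X_{c₁,t} contains a collider, then every such path is blocked by the adjustment set X̃ = ∪_{c≠c₂}{X_{c,t-s}} ∪ {X_{t-s-1},...,X_{t-s-p}} (p ≥ p₀); consequently X_{c₂,t-s} and X_{c₁,t} are d-separated given X̃ in D_interv. -/
/-!
Edges never go back in time, and `X̃` lies at times `≤ t - s`. A path from `(c₂, t - s)` to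
`(c₁, t)` starts at time `t - s < t`; let `u` be its last vertex at a time `≤ t - s`. The edge
from `u` to the next vertex points forward in time, with lag at most `p₀ ≤ p`. If `u` is the
start of the path, every later vertex, so every collider and each of its descendants, lies
strictly after `t - s`, outside `X̃`. Otherwise `u` is a non-collider other than
`(c₂, t - s)` at a time in `[t - s - p, t - s]`, hence in `X̃`.
-/

namespace MintT

variable {V : Type*}

/-- `u` and `v` are adjacent in the undirected skeleton of the digraph `E`. -/
def Adj (E : V → V → Prop) (u v : V) : Prop := E u v ∨ E v u

/-- `ℓ` is a path between `a` and `b`: consecutive vertices are adjacent and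
there are no repeated vertices. -/
def IsPathBetween (E : V → V → Prop) (a b : V) (ℓ : List V) : Prop :=
  ℓ.Chain' (Adj E) ∧ ℓ.head? = some a ∧ ℓ.getLast? = some b ∧ ℓ.Nodup

/-- The vertex `v` at interior position `i+1` of `ℓ` is a collider:
both neighbouring edges of the path point into `v`. -/
def IsColliderOn (E : V → V → Prop) (ℓ : List V) (i : ℕ) (v : V) : Prop :=
  ∃ u w, ℓ[i]? = some u ∧ ℓ[i + 1]? = some v ∧ ℓ[i + 2]? = some w ∧ E u v ∧ E w v

/-- The vertex `v` at interior position `i+1` of `ℓ` is a non-collider. -/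
def IsNonColliderOn (E : V → V → Prop) (ℓ : List V) (i : ℕ) (v : V) : Prop :=
  ∃ u w, ℓ[i]? = some u ∧ ℓ[i + 1]? = some v ∧ ℓ[i + 2]? = some w ∧ ¬(E u v ∧ E w v)

/-- Descendant relation of the digraph `E`. -/
def Desc (E : V → V → Prop) (v w : V) : Prop := Relation.ReflTransGen E v w

/-- `ℓ` is blocked by `Z`: it contains a non-collider in `Z`, or a collider
neither belonging to `Z` nor having a descendant in `Z` (standard d-separation
blocking). -/
def Blocked (E : V → V → Prop) (Z : Set V) (ℓ : List V) : Prop :=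
  ∃ i v, (IsNonColliderOn E ℓ i v ∧ v ∈ Z) ∨
    (IsColliderOn E ℓ i v ∧ v ∉ Z ∧ ∀ w, Desc E v w → w ∉ Z)

/-- `a` and `b` are d-separated given `Z` in the digraph `E`. -/
def DSep (E : V → V → Prop) (a b : V) (Z : Set V) : Prop :=
  ∀ ℓ, IsPathBetween E a b ℓ → Blocked E Z ℓ

end MintT

namespace List

variable {α : Type*}

theorem IsChain.rel_of_getElem? {R : α → α → Prop} {ℓ : List α} (h : ℓ.IsChain R) {i : ℕ}
    {u w : α} (hu : ℓ[i]? = some u) (hw : ℓ[i + 1]? = some w) : R u w := by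
  obtain ⟨hi, rfl⟩ := getElem?_eq_some_iff.1 hw
  obtain ⟨_, rfl⟩ := getElem?_eq_some_iff.1 hu
  exact h.getElem i hi

theorem exists_last_getElem?_of_head?_of_getLast? (q : α → Prop) {ℓ : List α} {a b : α}
    (ha : ℓ.head? = some a) (hqa : q a) (hb : ℓ.getLast? = some b) (hqb : ¬q b) :
    ∃ i u w, ℓ[i]? = some u ∧ ℓ[i + 1]? = some w ∧ q u ∧
      ∀ j x, i < j → ℓ[j]? = some x → ¬q x := by
  classical
  let P : ℕ → Prop := fun i => ∃ x, ℓ[i]? = some x ∧ q x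
  set i := Nat.findGreatest P (ℓ.length - 1)
  have hP : P i := Nat.findGreatest_spec (Nat.zero_le _) ⟨a, head?_eq_getElem? ▸ ha, hqa⟩
  have hlast : ∀ j x, i < j → ℓ[j]? = some x → ¬q x := fun j x hij hx hqx =>
    Nat.findGreatest_is_greatest hij
      (Nat.le_sub_one_of_lt (getElem?_eq_some_iff.1 hx).1) ⟨x, hx, hqx⟩
  obtain ⟨u, hu, hqu⟩ := hP
  have hi : i + 1 < ℓ.length := by
    have hi_le : i < ℓ.length := (getElem?_eq_some_iff.1 hu).1
    refine lt_of_le_of_ne hi_le fun hlen => hqb ?_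
    rw [getLast?_eq_getElem?, ← hlen, Nat.add_sub_cancel, hu, Option.some_inj] at hb
    exact hb ▸ hqu
  exact ⟨i, u, ℓ[i + 1], hu, getElem?_eq_getElem hi, hqu, hlast⟩

end List

namespace MintT

variable {V : Type*} {E : V → V → Prop} {T : V → ℤ}

theorem IsColliderOn.getElem?_eq {ℓ : List V} {i : ℕ} {v : V} (h : IsColliderOn E ℓ i v) :
    ℓ[i + 1]? = some v :=
  h.choose_spec.choose_spec.2.1

theorem Desc.le (hT : ∀ u v, E u v → T u ≤ T v) {v w : V} (h : Desc E v w) : T v ≤ T w := by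
  induction h with
  | refl => exact le_rfl
  | tail _ hxy ih => exact ih.trans (hT _ _ hxy)

theorem blocked_of_isColliderOn_of_lt (hT : ∀ u v, E u v → T u ≤ T v) {Z : Set V} {θ : ℤ}
    (hZ : ∀ z ∈ Z, T z ≤ θ) {ℓ : List V} {i : ℕ} {v : V} (hv : IsColliderOn E ℓ i v)
    (hθ : θ < T v) : Blocked E Z ℓ :=
  ⟨i, v, Or.inr ⟨hv, fun hvZ => (hZ v hvZ).not_gt hθ,
    fun w hvw hwZ => (hZ w hwZ).not_gt (hθ.trans_le (hvw.le hT))⟩⟩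

theorem isNonColliderOn_of_lt (hT : ∀ u v, E u v → T u ≤ T v) {ℓ : List V} {i : ℕ}
    {x u w : V} (hx : ℓ[i]? = some x) (hu : ℓ[i + 1]? = some u) (hw : ℓ[i + 2]? = some w)
    (huw : T u < T w) : IsNonColliderOn E ℓ i u :=
  ⟨x, w, hx, hu, hw, fun ⟨_, hwu⟩ => (hT w u hwu).not_gt huw⟩

theorem Adj.rel_of_lt (hT : ∀ u v, E u v → T u ≤ T v) {u w : V} (h : Adj E u w)
    (huw : T u < T w) : E u w :=
  h.resolve_right fun hwu => (hT w u hwu).not_gt huw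

theorem blocked_of_isPathBetween {L θ : ℤ} (hE : ∀ u v, E u v → T u ≤ T v ∧ T v ≤ T u + L)
    {Z : Set V} (hZ_le : ∀ z ∈ Z, T z ≤ θ) {a b : V}
    (hZ_mem : ∀ x, x ≠ a → θ - L ≤ T x → T x ≤ θ → x ∈ Z) (ha : T a ≤ θ) (hb : θ < T b)
    {ℓ : List V} (hℓ : IsPathBetween E a b ℓ) (hcol : ∃ i v, IsColliderOn E ℓ i v) :
    Blocked E Z ℓ := by
  have hT : ∀ u v, E u v → T u ≤ T v := fun u v h => (hE u v h).1
  obtain ⟨hchain, ha', hb', hnodup⟩ := hℓ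
  obtain ⟨i, u, w, hu, hw, hu_le, hlate⟩ :=
    List.exists_last_getElem?_of_head?_of_getLast? (fun x => T x ≤ θ) ha' ha hb' hb.not_ge
  have hw_late : θ < T w := not_le.1 (hlate _ _ i.lt_succ_self hw)
  cases i with
  | zero =>
    obtain ⟨j, v, hv⟩ := hcol
    exact blocked_of_isColliderOn_of_lt hT hZ_le hv
      (not_le.1 (hlate _ _ j.succ_pos hv.getElem?_eq))
  | succ k =>
    have hk : k < ℓ.length := Nat.lt_of_succ_lt (List.getElem?_eq_some_iff.1 hu).1
    have hua : u ≠ a := by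
      rintro rfl
      rw [List.head?_eq_getElem?, ← hu, List.getElem?_inj (by omega) hnodup] at ha'
      exact k.succ_ne_zero ha'.symm
    have huw : E u w := (hchain.rel_of_getElem? hu hw).rel_of_lt hT (hu_le.trans_lt hw_late)
    exact ⟨k, u, Or.inl ⟨isNonColliderOn_of_lt hT (List.getElem?_eq_getElem hk) hu hw
      (hu_le.trans_lt hw_late), hZ_mem u hua (by linarith [(hE u w huw).2]) hu_le⟩⟩

end MintT

/-- In the interventional DAG `D_interv` obtained from the
time-invariant DAG `D` of a stationary Markov process of order `p₀` (with
possible instantaneous effects) by deleting all edges into the node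
`(c₂, t-s)`: if every path between `X_{c₂,t-s}` and `X_{c₁,t}` contains a
collider, then every such path is blocked by the adjustment set
`X̃ = ∪_{c≠c₂}{X_{c,t-s}} ∪ {X_{t-s-1},…,X_{t-s-p}}` (with `p ≥ p₀`);
consequently `X_{c₂,t-s}` and `X_{c₁,t}` are d-separated given `X̃` in
`D_interv`. -/
theorem collider_paths_blocked_by_instantaneous_adjustment
    (l p₀ p : ℕ) (hp : p₀ ≤ p)
    (par : Fin l × ℤ → Fin l × ℤ → Prop)
    -- edges go forward in time by at most `p₀` steps, or are instantaneous
    -- between different components: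
    (hstruct : ∀ (d c : Fin l) (τ' τ : ℤ), par (d, τ') (c, τ) →
      (τ' < τ ∧ τ - τ' ≤ (p₀ : ℤ)) ∨ (τ' = τ ∧ d ≠ c))
    (c₁ c₂ : Fin l) (t s : ℤ) (hs : 1 ≤ s)
    -- the interventional DAG: all arrows into `(c₂, t-s)` are deleted:
    (parI : Fin l × ℤ → Fin l × ℤ → Prop)
    (hparI : ∀ u v, parI u v ↔ par u v ∧ v ≠ (c₂, t - s))
    -- the adjustment set X̃:
    (Z : Set (Fin l × ℤ))
    (hZ : Z = {v | (v.2 = t - s ∧ v.1 ≠ c₂) ∨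
      (t - s - (p : ℤ) ≤ v.2 ∧ v.2 ≤ t - s - 1)})
    -- every path between the intervention node and the target has a collider:
    (hcol : ∀ ℓ, MintT.IsPathBetween parI (c₂, t - s) (c₁, t) ℓ →
      ∃ i v, MintT.IsColliderOn parI ℓ i v) :
    (∀ ℓ, MintT.IsPathBetween parI (c₂, t - s) (c₁, t) ℓ →
        MintT.Blocked parI Z ℓ) ∧
      MintT.DSep parI (c₂, t - s) (c₁, t) Z := by
  have hlag : ∀ u v, parI u v → u.2 ≤ v.2 ∧ v.2 ≤ u.2 + p := by
    rintro ⟨d, τ'⟩ ⟨c, τ⟩ huv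
    rcases hstruct d c τ' τ ((hparI _ _).1 huv).1 with h | h <;> omega
  have hZ_le : ∀ z ∈ Z, z.2 ≤ t - s := by
    subst hZ
    rintro z (h | h) <;> omega
  have hZ_mem : ∀ x, x ≠ (c₂, t - s) → t - s - p ≤ x.2 → x.2 ≤ t - s → x ∈ Z := by
    rintro ⟨c, τ⟩ hx hlo hhi
    subst hZ
    rcases hhi.eq_or_lt with rfl | hlt
    · exact Or.inl ⟨rfl, fun hc => hx (hc ▸ rfl)⟩
    · exact Or.inr ⟨hlo, by omega⟩
  have hblocked : ∀ ℓ, MintT.IsPathBetween parI (c₂, t - s) (c₁, t) ℓ →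
      MintT.Blocked parI Z ℓ := fun ℓ hℓ =>
    MintT.blocked_of_isPathBetween hlag hZ_le hZ_mem le_rfl (by omega) hℓ (hcol ℓ hℓ)
  exact ⟨hblocked, hblocked⟩
end

section
/- Let (X_t) be a strictly stationary Markov process of order p₀ generated by a SEM without instantaneous effects, and let S be any set containing {X_{t-s-1},...,X_{t-s-p}} with p ≥ p₀, consisting only of variables at times ≤ t-s-1. Then S is a valid backdoor adjustment set for the intervention do(X_{c₂,t-s} = x) on the target X_{c₁,t} (s ≥ 1): S contains no descendants of (c₂, t-s) and blocks every backdoor path from (c₂, t-s) to (c₁, t) in the associated infinite DAG. -/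
/-! Every edge goes forward in time, so descendants of `(c₂, t-s)` live after `t-s` while `S`
lives before it. A backdoor path leaves `(c₂, t-s)` through a parent, which lies in the lag window
`t-s-p₀, …, t-s-1 ⊆ S`; the path enters that parent by an edge out of it, so it is a non-collider
in `S` (it cannot be the endpoint `(c₁, t)`, which lies in the future). -/

namespace MintT

variable {V : Type*}

/-- A backdoor path from `a` to `b`: a path whose first edge points into `a`. -/
def IsBackdoorPath (E : V → V → Prop) (a b : V) (ℓ : List V) : Prop :=
  IsPathBetween E a b ℓ ∧ ∃ u, ℓ[1]? = some u ∧ E u a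

theorem lt_of_transGen_of_forall_lt {α : Type*} [Preorder α] {E : V → V → Prop} {f : V → α}
    (hf : ∀ u v, E u v → f u < f v) {a b : V} (h : Relation.TransGen E a b) : f a < f b := by
  have hlift : Relation.TransGen (· < ·) (f a) (f b) := Relation.TransGen.lift f hf _ _ h
  rwa [Relation.transGen_eq_self] at hlift

theorem IsBackdoorPath.blocked_of_parents_mem {E : V → V → Prop} {Z : Set V} {a b : V}
    {ℓ : List V} (hℓ : IsBackdoorPath E a b ℓ) (hasymm : ∀ u, E u a → ¬ E a u)
    (hparents : ∀ u, E u a → u ∈ Z) (hb : b ∉ Z) : Blocked E Z ℓ := by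
  obtain ⟨⟨-, hhead, hlast, -⟩, u, hu, hua⟩ := hℓ
  have hub : u ≠ b := fun h => hb (h ▸ hparents u hua)
  have hlen : 2 < ℓ.length := by
    have h1 : 1 < ℓ.length := by
      by_contra h
      rw [List.getElem?_eq_none (by omega)] at hu
      cases hu
    by_contra h
    rw [List.getLast?_eq_getElem?, show ℓ.length - 1 = 1 by omega, hu] at hlast
    exact hub (Option.some.inj hlast)
  refine ⟨0, u, Or.inl ⟨⟨a, ℓ[2], ?_, hu, List.getElem?_eq_getElem hlen,
    fun h => hasymm u hua h.1⟩, hparents u hua⟩⟩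
  rwa [← List.head?_eq_getElem?]

end MintT

/-- For a strictly stationary Markov process of order `p₀`
generated by a SEM without instantaneous effects (all edges of the associated
infinite DAG go strictly forward in time, reaching at most `p₀` steps back),
any set `S` of variables at times `≤ t-s-1` that contains all variables at
times `t-s-1, …, t-s-p` with `p ≥ p₀` is a valid backdoor adjustment set for
the intervention `do(X_{c₂,t-s} = x)` on the target `X_{c₁,t}` (`s ≥ 1`):
`S` contains no descendants of `(c₂, t-s)`, and `S` blocks every backdoor path
from `(c₂, t-s)` to `(c₁, t)`. -/
theorem lagged_past_is_valid_backdoor_adjustment_set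
    (l p₀ p : ℕ) (hp : p₀ ≤ p)
    (par : Fin l × ℤ → Fin l × ℤ → Prop)
    -- no instantaneous effects: all edges go strictly forward in time,
    -- by at most `p₀` steps:
    (hstruct : ∀ (d c : Fin l) (τ' τ : ℤ), par (d, τ') (c, τ) →
      τ' < τ ∧ τ - τ' ≤ (p₀ : ℤ))
    (c₁ c₂ : Fin l) (t s : ℤ) (hs : 1 ≤ s)
    (S : Set (Fin l × ℤ))
    -- S consists only of variables at times ≤ t-s-1 …
    (hSpast : ∀ v ∈ S, v.2 ≤ t - s - 1)
    -- … and contains all variables at times t-s-p, …, t-s-1: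
    (hSlags : ∀ v : Fin l × ℤ,
      t - s - (p : ℤ) ≤ v.2 → v.2 ≤ t - s - 1 → v ∈ S) :
    (∀ v ∈ S, ¬ Relation.TransGen par (c₂, t - s) v) ∧
      (∀ ℓ, MintT.IsBackdoorPath par (c₂, t - s) (c₁, t) ℓ →
        MintT.Blocked par S ℓ) := by
  have hforward : ∀ u v, par u v → u.2 < v.2 := fun u v h => (hstruct u.1 v.1 u.2 v.2 h).1
  refine ⟨fun v hv hdesc => ?_, fun ℓ hℓ => hℓ.blocked_of_parents_mem ?_ ?_ ?_⟩
  · have hv_future := MintT.lt_of_transGen_of_forall_lt hforward hdesc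
    have hv_past := hSpast v hv
    omega
  · intro u hu hback
    have := hforward _ _ hu
    have := hforward _ _ hback
    omega
  · intro u hu
    obtain ⟨hbefore, hlag⟩ := hstruct u.1 c₂ u.2 (t - s) hu
    exact hSlags u (by omega) (by omega)
  · intro ht
    have ht_past : t ≤ t - s - 1 := hSpast _ ht
    omega
end
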